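/- Let C be a linear [n,k,d] rank-metric code over F_{q^m} with parity-check matrix H. Let E ∈ F_{q^m}^{ℓ×n} with F_q-rank t < d, let B ∈ F_q^{t×n} be a matrix whose rows form a basis of rank support of E, and let S = H·Eᵀ. Then the linear system S = (H·Bᵀ)·Aᵀ has a unique solution A ∈ F_{q^m}^{ℓ×t}, and this solution satisfies E = A·B. -/

import Mathlib

open Matrix

noncomputable def extV {K L : Type} [Field K] [Field L] [Algebra K L]
    {m n : ℕ} (γ : Module.Basis (Fin m) K L) (v : Fin n → L) : Matrix (Fin m) (Fin n) K :=
  Matrix.of fun i j => γ.repr (v j) i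

noncomputable def extM {K L : Type} [Field K] [Field L] [Algebra K L]
    {m n : ℕ} {ι : Type} (γ : Module.Basis (Fin m) K L) (E : Matrix ι (Fin n) L) :
    Matrix (ι × Fin m) (Fin n) K :=
  Matrix.of fun p j => γ.repr (E p.1 j) p.2

/-!
Expansion over `γ` is a bijection between `L`-matrices and `K`-matrices that turns `A * B` into
`extM γ A * B` when `B` has entries in `K`. The rows of `extM γ E` lie in the row space of `B`, so
`extM γ E = C * B`, and the `A₀` with `extM γ A₀ = C` satisfies `E = A₀ * B`; in particular it
solves the system. For any solution `A`, every row of `E - A * B` is a codeword whose expansion has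
its rows in the row space of `B`, hence rank at most `t < d`, so it vanishes: `E = A * B`. As the
rows of `B` are independent, `A * B = A₀ * B` forces `A = A₀`.
-/

namespace Matrix

variable {R : Type*} {l m n : Type*}

theorem exists_eq_mul_of_row_mem_span [CommRing R] [Fintype m] {M : Matrix l n R}
    {B : Matrix m n R} (h : ∀ i, M i ∈ Submodule.span R (Set.range B)) : ∃ C, M = C * B := by
  choose c hc using fun i => LinearMap.mem_range.1 ((range_vecMulLinear B).ge (h i))
  exact ⟨of c, funext fun i => (hc i).symm⟩

theorem row_mul_mem_span [CommRing R] [Fintype m] (X : Matrix l m R) (B : Matrix m n R) (i : l) :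
    (X * B) i ∈ Submodule.span R (Set.range B) :=
  (range_vecMulLinear B).le ⟨X i, rfl⟩

theorem rank_le_of_row_mem_span [Field R] [Finite l] [Finite m] [Fintype n] {M : Matrix l n R}
    {B : Matrix m n R} (h : ∀ i, M i ∈ Submodule.span R (Set.range B)) : M.rank ≤ B.rank := by
  rw [rank_eq_finrank_span_row, rank_eq_finrank_span_row]
  exact Submodule.finrank_mono (Submodule.span_le.2 (Set.range_subset_iff.2 h))

theorem linearIndependent_row_of_rank_eq_card [Field R] [Fintype m] [Fintype n] {B : Matrix m n R}
    (hB : B.rank = Fintype.card m) : LinearIndependent R B.row := by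
  rw [linearIndependent_iff_card_eq_finrank_span, Set.finrank, ← hB, rank_eq_finrank_span_row]

theorem mul_right_cancel_of_rank_eq_card [Field R] [Fintype m] [Fintype n] {B : Matrix m n R}
    (hB : B.rank = Fintype.card m) {X Y : Matrix l m R} (h : X * B = Y * B) : X = Y :=
  funext fun i => vecMul_injective_iff.2 (linearIndependent_row_of_rank_eq_card hB) (congrFun h i)

end Matrix

section Expansion

variable {K L : Type} [Field K] [Field L] [Algebra K L] {m n : ℕ} {ι : Type}
  (γ : Module.Basis (Fin m) K L)

theorem extM_injective : Function.Injective (extM γ : Matrix ι (Fin n) L → _) := by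
  intro E F h
  ext i j
  exact γ.repr.injective <| Finsupp.ext fun r => congrFun (congrFun h (i, r)) j

theorem extM_surjective : Function.Surjective (extM γ : Matrix ι (Fin n) L → _) := by
  intro C
  refine ⟨Matrix.of fun i j => γ.equivFun.symm fun r => C (i, r) j, ?_⟩
  ext p j
  change γ.equivFun (γ.equivFun.symm _) p.2 = _
  rw [LinearEquiv.apply_symm_apply]

theorem extM_sub (E F : Matrix ι (Fin n) L) : extM γ (E - F) = extM γ E - extM γ F := by
  ext p j
  simp [extM]

theorem extM_mul_map_algebraMap {t : ℕ} (A : Matrix ι (Fin t) L)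
    (B : Matrix (Fin t) (Fin n) K) :
    extM γ (A * B.map (algebraMap K L)) = extM γ A * B := by
  ext p j
  simp only [extM, of_apply, mul_apply, map_apply, map_sum, Finsupp.coe_finsetSum,
    Finset.sum_apply]
  refine Finset.sum_congr rfl fun s _ => ?_
  rw [mul_comm, ← Algebra.smul_def, map_smul, Finsupp.smul_apply, smul_eq_mul, mul_comm]

theorem eq_zero_of_rank_extM_lt {κ : Type} {d : ℕ}
    {H : Matrix κ (Fin n) L} (hd : ∀ v : Fin n → L, H *ᵥ v = 0 → v ≠ 0 → d ≤ (extV γ v).rank)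
    {D : Matrix ι (Fin n) L} (hHD : H * Dᵀ = 0) (hD : (extM γ D).rank < d) : D = 0 := by
  ext i j
  by_contra hij
  have hrow : D i ≠ 0 := fun h => hij (congrFun h j)
  have hker : H *ᵥ D i = 0 := by
    funext r
    simpa [mul_apply, mulVec, dotProduct] using congrFun (congrFun hHD r) i
  have := (hd _ hker hrow).trans (rank_submatrix_le (extM γ D) (fun r => (i, r)) id)
  omega

end Expansion

theorem erasure_decoding_unique_general {m n k d ℓ t : ℕ} (K L : Type) [Field K]
    [Field L] [Algebra K L]
    (γ : Module.Basis (Fin m) K L)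
    (H : Matrix (Fin (n - k)) (Fin n) L)
    (hd : ∀ v : Fin n → L, H.mulVec v = 0 → v ≠ 0 → d ≤ (extV γ v).rank)
    (E : Matrix (Fin ℓ) (Fin n) L) (htd : t < d)
    (B : Matrix (Fin t) (Fin n) K) (hBrk : B.rank = t)
    (hBsupp : Submodule.span K (Set.range B) = Submodule.span K (Set.range (extM γ E))) :
    (∃! A : Matrix (Fin ℓ) (Fin t) L,
        H * Eᵀ = H * (B.map (algebraMap K L))ᵀ * Aᵀ) ∧
      ∀ A : Matrix (Fin ℓ) (Fin t) L,
        H * Eᵀ = H * (B.map (algebraMap K L))ᵀ * Aᵀ → E = A * B.map (algebraMap K L) := by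
  have hEspan : ∀ p, extM γ E p ∈ Submodule.span K (Set.range B) :=
    fun p => hBsupp ▸ Submodule.subset_span ⟨p, rfl⟩
  have solution_spec : ∀ A : Matrix (Fin ℓ) (Fin t) L,
      H * Eᵀ = H * (B.map (algebraMap K L))ᵀ * Aᵀ → E = A * B.map (algebraMap K L) := by
    intro A hA
    refine sub_eq_zero.1 (eq_zero_of_rank_extM_lt γ hd ?_ ?_)
    · rw [transpose_sub, Matrix.mul_sub, transpose_mul, ← Matrix.mul_assoc, hA, sub_self]
    · rw [extM_sub, extM_mul_map_algebraMap]
      refine (rank_le_of_row_mem_span fun p => ?_).trans_lt (hBrk ▸ htd)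
      exact Submodule.sub_mem _ (hEspan p) (row_mul_mem_span _ B p)
  obtain ⟨C, hC⟩ := exists_eq_mul_of_row_mem_span hEspan
  obtain ⟨A₀, rfl⟩ := extM_surjective γ C
  have hA₀ : E = A₀ * B.map (algebraMap K L) :=
    extM_injective γ (hC.trans (extM_mul_map_algebraMap γ A₀ B).symm)
  have hA₀_solves : H * Eᵀ = H * (B.map (algebraMap K L))ᵀ * A₀ᵀ := by
    rw [hA₀, transpose_mul, Matrix.mul_assoc]
  refine ⟨⟨A₀, hA₀_solves, fun A hA => ?_⟩, solution_spec⟩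
  refine extM_injective γ
    (mul_right_cancel_of_rank_eq_card (hBrk.trans (Fintype.card_fin t).symm) ?_)
  rw [← extM_mul_map_algebraMap, ← extM_mul_map_algebraMap, ← solution_spec A hA, ← hA₀]

/-- erasure decoding: let `H` be a full-rank parity-check matrix of a linear
`[n,k,d]` rank-metric code over `F_{q^m}`, `E ∈ F_{q^m}^{ℓ×n}` of `F_q`-rank `t < d`,
`B ∈ F_q^{t×n}` a basis matrix of the rank support of `E`, and `S = H·Eᵀ`. Then the linear
system `S = (H·Bᵀ)·Aᵀ` has a unique solution `A ∈ F_{q^m}^{ℓ×t}`, and this solution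
satisfies `E = A·B`. -/
theorem erasure_decoding_unique {q m n k d ℓ t : ℕ} (K L : Type) [Field K] [Fintype K]
    [Field L] [Fintype L] [Algebra K L] (hK : Fintype.card K = q) (hL : Fintype.card L = q ^ m)
    (γ : Module.Basis (Fin m) K L)
    (H : Matrix (Fin (n - k)) (Fin n) L) (hH : H.rank = n - k)
    (hd : ∀ v : Fin n → L, H.mulVec v = 0 → v ≠ 0 → d ≤ (extV γ v).rank)
    (hd' : ∃ v : Fin n → L, H.mulVec v = 0 ∧ v ≠ 0 ∧ (extV γ v).rank = d)
    (E : Matrix (Fin ℓ) (Fin n) L) (ht : (extM γ E).rank = t) (htd : t < d)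
    (B : Matrix (Fin t) (Fin n) K) (hBrk : B.rank = t)
    (hBsupp : Submodule.span K (Set.range B) = Submodule.span K (Set.range (extM γ E))) :
    (∃! A : Matrix (Fin ℓ) (Fin t) L,
        H * Eᵀ = H * (B.map (algebraMap K L))ᵀ * Aᵀ) ∧
      ∀ A : Matrix (Fin ℓ) (Fin t) L,
        H * Eᵀ = H * (B.map (algebraMap K L))ᵀ * Aᵀ → E = A * B.map (algebraMap K L) :=
  erasure_decoding_unique_general K L γ H hd E htd B hBrk hBsupp
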